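/- arXiv:2512.02373 — 4 statements merged into one kernel-verified Lean document; each statement's English description precedes it below -/
import Mathlib

section
/- Let A be a commutative ring, I an ideal of A, P a projective A-module and Q an A-module. If 𝔣 : A^{n} ⊕ Q ↠ I ⊕ P is any surjective A-linear map with I ⊕ P projective as an A-module, then P₀ := 𝔣⁻¹(I × 0) surjects onto I and P₀ ⊕ P ≅ Q ⊕ A^{n}. -/
/-- final claim: if `𝔣 : A^n ⊕ Q ↠ I ⊕ P` is a surjective linear map with
`I ⊕ P` projective, then `P₀ := 𝔣⁻¹(I × 0)` surjects onto `I` and `P₀ ⊕ P ≅ Q ⊕ A^n`. -/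
theorem stmt1 {A : Type*} [CommRing A] (I : Ideal A)
    (P Q : Type*) [AddCommGroup P] [Module A P] [AddCommGroup Q] [Module A Q]
    (n : ℕ) (f : ((Fin n → A) × Q) →ₗ[A] (↥I × P)) (hf : Function.Surjective f)
    (hproj : Module.Projective A (↥I × P))
    (P₀ : Submodule A ((Fin n → A) × Q))
    (hP₀ : P₀ = Submodule.comap f ((⊤ : Submodule A ↥I).prod (⊥ : Submodule A P))) :
    (Function.Surjective fun p : ↥P₀ => (f p.1).1) ∧
      Nonempty ((↥P₀ × P) ≃ₗ[A] (Q × (Fin n → A))) := by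
  constructor
  · intro i
    obtain ⟨x, hx⟩ := hf (i, 0)
    refine ⟨⟨x, ?_⟩, ?_⟩
    · rw [hP₀]
      simp [Submodule.mem_comap, hx, Submodule.mem_prod]
    · simp [hx]
  · -- P is projective as a retract of I × P
    have hPproj : Module.Projective A P :=
      Module.Projective.of_split (LinearMap.inr A ↥I P) (LinearMap.snd A ↥I P) (by ext; simp)
    -- g : (Fin n → A) × Q → P
    set g : ((Fin n → A) × Q) →ₗ[A] P := (LinearMap.snd A ↥I P).comp f with hg
    have hgsurj : Function.Surjective g := by
      intro p
      obtain ⟨x, hx⟩ := hf (0, p)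
      exact ⟨x, by simp [hg, hx]⟩
    have hker : LinearMap.range P₀.subtype = LinearMap.ker g := by
      ext x
      simp only [Submodule.range_subtype, hP₀, Submodule.mem_comap, Submodule.mem_prod,
        Submodule.mem_top, true_and, Submodule.mem_bot, LinearMap.mem_ker, hg,
        LinearMap.comp_apply, LinearMap.snd_apply]
    obtain ⟨s, hs⟩ := Module.projective_lifting_property g LinearMap.id hgsurj
    have hgs : ∀ p : P, g (s p) = p := fun p => congrFun (congrArg DFunLike.coe hs) p
    have hmem : ∀ x : (Fin n → A) × Q, x - s (g x) ∈ P₀ := by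
      intro x
      have : g (x - s (g x)) = 0 := by simp [map_sub, hgs]
      have := (LinearMap.mem_ker).2 this
      rw [← hker] at this
      simpa [Submodule.range_subtype] using this
    have e : (↥P₀ × P) ≃ₗ[A] ((Fin n → A) × Q) := LinearEquiv.ofLinear
      (LinearMap.coprod P₀.subtype s)
      (LinearMap.prod
        (LinearMap.codRestrict P₀ ((LinearMap.id (M := (Fin n → A) × Q)) - s.comp g)
          (fun x => hmem x)) g)
      (by
        apply LinearMap.ext
        intro x
        simp only [LinearMap.comp_apply, LinearMap.prod_apply, Function.prod,
          LinearMap.coprod_apply, Submodule.subtype_apply, LinearMap.codRestrict_apply,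
          LinearMap.sub_apply, LinearMap.id_apply, LinearMap.id_coe, id_eq]
        abel)
      (by
        apply LinearMap.ext
        rintro ⟨p, q⟩
        have hp0 : g (p : (Fin n → A) × Q) = 0 := by
          have : (p : (Fin n → A) × Q) ∈ LinearMap.ker g := by
            rw [← hker]; simpa [Submodule.range_subtype] using p.2
          simpa using this
        simp only [LinearMap.comp_apply, LinearMap.coprod_apply, Submodule.subtype_apply,
          LinearMap.prod_apply, Function.prod, LinearMap.id_apply, LinearMap.id_coe, id_eq]
        refine Prod.ext (Subtype.ext ?_) ?_
        · simp only [map_add, Submodule.coe_add, LinearMap.codRestrict_apply,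
            LinearMap.sub_apply, LinearMap.comp_apply, LinearMap.id_apply, hp0, hgs,
            map_zero, sub_zero, sub_self, add_zero]
        · simp only [map_add, hp0, hgs, zero_add])
    exact ⟨e.trans (LinearEquiv.prodComm A (Fin n → A) Q)⟩
end

section
/- Let A be a commutative ring, J an ideal, and t = 1 + s with s ∈ J. If t is a nonzerodivisor in A, then the quotient module J/tJ is isomorphic as an A-module to A/tA. -/
/-!
Write `I = (t)`. Since `t ≡ 1` modulo `J`, the ideals `I` and `J` are comaximal, so `I ∩ J = I J`
and `J → A/I` is onto; its kernel is `J ∩ I = I J`, which gives `J / I J ≅ A / I`.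
-/

namespace Submodule

variable {R M : Type*} [Ring R] [AddCommGroup M] [Module R M]

theorem mkQ_comp_subtype_surjective_of_sup_eq_top {p p' : Submodule R M} (h : p ⊔ p' = ⊤) :
    Function.Surjective (p'.mkQ ∘ₗ p.subtype) := by
  intro x
  obtain ⟨x, rfl⟩ := p'.mkQ_surjective x
  obtain ⟨y, hy, z, hz, rfl⟩ := (sup_eq_top_iff p p').mp h x
  refine ⟨⟨y, hy⟩, ?_⟩
  simpa [Quotient.eq] using neg_mem hz

noncomputable def quotientComapSubtypeEquivOfSupEqTop {p p' : Submodule R M} (h : p ⊔ p' = ⊤) :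
    (p ⧸ p'.comap p.subtype) ≃ₗ[R] M ⧸ p' :=
  (quotEquivOfEq _ _ (by rw [LinearMap.ker_comp, ker_mkQ])).trans
    ((p'.mkQ ∘ₗ p.subtype).quotKerEquivOfSurjective
      (mkQ_comp_subtype_surjective_of_sup_eq_top h))

end Submodule

namespace Ideal

variable {A : Type*} [CommRing A]

theorem sup_span_singleton_eq_top_of_sub_one_mem {J : Ideal A} {t : A} (h : t - 1 ∈ J) :
    J ⊔ span {t} = ⊤ :=
  (eq_top_iff_one _).mpr <| by
    simpa using sub_mem (mem_sup_right (mem_span_singleton_self t)) (mem_sup_left h)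

theorem comap_subtype_mul_eq_comap_subtype {I J : Ideal A} (h : J ⊔ I = ⊤) :
    Submodule.comap J.subtype (I * J) = Submodule.comap J.subtype I := by
  rw [mul_eq_inf_of_coprime (sup_comm J I ▸ h), Submodule.comap_inf, Submodule.comap_subtype_self,
    inf_top_eq]

end Ideal

theorem stmt3_general {A : Type*} [CommRing A] (J : Ideal A) (s : A) (hs : s ∈ J)
    (t : A) (ht : t = 1 + s) :
    Nonempty ((↥J ⧸ (Submodule.comap J.subtype (Ideal.span {t} * J) : Submodule A ↥J))
      ≃ₗ[A] (A ⧸ Ideal.span {t})) := by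
  have hcomax : J ⊔ Ideal.span {t} = ⊤ :=
    Ideal.sup_span_singleton_eq_top_of_sub_one_mem (by simpa [ht] using hs)
  exact ⟨(Submodule.quotEquivOfEq _ _ (Ideal.comap_subtype_mul_eq_comap_subtype hcomax)).trans
    (Submodule.quotientComapSubtypeEquivOfSupEqTop hcomax)⟩

/-- if `s ∈ J` and `t = 1 + s` is a nonzerodivisor, then
`J/tJ ≅ A/tA` as `A`-modules. -/
theorem stmt3 {A : Type*} [CommRing A] (J : Ideal A) (s : A) (hs : s ∈ J)
    (t : A) (ht : t = 1 + s) (hreg : t ∈ nonZeroDivisors A) :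
    Nonempty ((↥J ⧸ (Submodule.comap J.subtype (Ideal.span {t} * J) : Submodule A ↥J))
      ≃ₗ[A] (A ⧸ Ideal.span {t})) :=
  stmt3_general J s hs t ht
end

section
/- Let A be a commutative ring and I, J comaximal ideals of A. Then the natural map IJ/(IJ)² → I/I² ⊕ J/J² induced by inclusion-then-projection is an isomorphism of A-modules, where (IJ)² = I²J². -/
/-- for comaximal ideals `I, J`, the canonical map
`IJ/(IJ)² → I/I² ⊕ J/J²`, sending the class of `x` to the pair of classes of `x`,
is an isomorphism of `A`-modules. -/
theorem stmt7 {A : Type*} [CommRing A] (I J : Ideal A) (hcom : I ⊔ J = ⊤) :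
    ∃ e : (↥(I * J) ⧸ (Submodule.comap (I * J).subtype ((I * J) ^ 2) : Submodule A ↥(I * J)))
        ≃ₗ[A] ((↥I ⧸ (Submodule.comap I.subtype (I ^ 2) : Submodule A ↥I)) ×
               (↥J ⧸ (Submodule.comap J.subtype (J ^ 2) : Submodule A ↥J))),
      ∀ (x : ↥(I * J)) (hI : (x : A) ∈ I) (hJ : (x : A) ∈ J),
        e (Submodule.Quotient.mk x) =
          (Submodule.Quotient.mk ⟨(x : A), hI⟩, Submodule.Quotient.mk ⟨(x : A), hJ⟩) := by
  obtain ⟨a, ha, b, hb, hab⟩ := Submodule.mem_sup.1 (hcom ▸ Submodule.mem_top (x := (1 : A)))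
  have hIJ_I : I * J ≤ I := Ideal.mul_le_left
  have hIJ_J : I * J ≤ J := Ideal.mul_le_right
  set N : Submodule A ↥(I * J) := Submodule.comap (I * J).subtype ((I * J) ^ 2)
  set NI : Submodule A ↥I := Submodule.comap I.subtype (I ^ 2)
  set NJ : Submodule A ↥J := Submodule.comap J.subtype (J ^ 2)
  set f : ↥(I * J) →ₗ[A] (↥I ⧸ NI) × (↥J ⧸ NJ) :=
    ((NI.mkQ.comp (Submodule.inclusion hIJ_I)).prod
      (NJ.mkQ.comp (Submodule.inclusion hIJ_J))) with hf
  have hker : N ≤ LinearMap.ker f := by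
    intro x hx
    have hx2 : (x : A) ∈ (I * J) ^ 2 := hx
    have hxI2 : (x : A) ∈ I ^ 2 := Ideal.pow_right_mono hIJ_I 2 hx2
    have hxJ2 : (x : A) ∈ J ^ 2 := Ideal.pow_right_mono hIJ_J 2 hx2
    simp only [hf, LinearMap.mem_ker, LinearMap.prod_apply, LinearMap.comp_apply,
      Function.prod, Prod.mk_eq_zero, Submodule.mkQ_apply, Submodule.Quotient.mk_eq_zero]
    exact ⟨hxI2, hxJ2⟩
  set g := N.liftQ f hker with hg
  have hgmk : ∀ (x : ↥(I * J)) (hI : (x : A) ∈ I) (hJ : (x : A) ∈ J),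
      g (Submodule.Quotient.mk x) =
        (Submodule.Quotient.mk ⟨(x : A), hI⟩, Submodule.Quotient.mk ⟨(x : A), hJ⟩) :=
    fun x hI hJ => rfl
  have hinj : Function.Injective g := by
    rw [← LinearMap.ker_eq_bot, hg, Submodule.ker_liftQ, Submodule.eq_bot_iff]
    intro y hy
    obtain ⟨x, hx, rfl⟩ := Submodule.mem_map.1 hy
    have hxI2 : (x : A) ∈ I ^ 2 := by
      have := (Prod.mk_eq_zero.1 (LinearMap.mem_ker.1 hx)).1
      simpa [hf, NI, Submodule.Quotient.mk_eq_zero] using this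
    have hxJ2 : (x : A) ∈ J ^ 2 := by
      have := (Prod.mk_eq_zero.1 (LinearMap.mem_ker.1 hx)).2
      simpa [hf, NJ, Submodule.Quotient.mk_eq_zero] using this
    rw [Submodule.mkQ_apply, Submodule.Quotient.mk_eq_zero]
    show (x : A) ∈ (I * J) ^ 2
    have hxIJ : (x : A) ∈ I * J := x.2
    have key : (x : A) = a * a * x + 2 * (x * (a * b)) + x * (b * b) := by
      linear_combination (-(x : A) * (a + b + 1)) * hab
    rw [key]
    have h1 : a * a * (x : A) ∈ (I * J) ^ 2 := by
      have : a * a * (x : A) ∈ I ^ 2 * J ^ 2 :=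
        Ideal.mul_mem_mul (by rw [pow_two]; exact Ideal.mul_mem_mul ha ha) hxJ2
      rwa [← mul_pow] at this
    have h2 : (x : A) * (a * b) ∈ (I * J) ^ 2 := by
      rw [pow_two]
      exact Ideal.mul_mem_mul hxIJ (Ideal.mul_mem_mul ha hb)
    have h3 : (x : A) * (b * b) ∈ (I * J) ^ 2 := by
      have : (x : A) * (b * b) ∈ I ^ 2 * J ^ 2 :=
        Ideal.mul_mem_mul hxI2 (by rw [pow_two]; exact Ideal.mul_mem_mul hb hb)
      rwa [← mul_pow] at this
    exact add_mem (add_mem h1 (Ideal.mul_mem_left _ 2 h2)) h3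
  have hsurj : Function.Surjective g := by
    rintro ⟨p, q⟩
    obtain ⟨i, rfl⟩ := Submodule.Quotient.mk_surjective NI p
    obtain ⟨j, rfl⟩ := Submodule.Quotient.mk_surjective NJ q
    have hxmem : (i : A) * (b * b) + (j : A) * (a * a) ∈ I * J := by
      refine add_mem ?_ ?_
      · simpa [mul_assoc] using Ideal.mul_mem_right b _ (Ideal.mul_mem_mul i.2 hb)
      · have : a * ((j : A) * a) ∈ I * J := by
          have : a * (j : A) ∈ I * J := Ideal.mul_mem_mul ha j.2
          simpa [mul_comm, mul_assoc, mul_left_comm] using Ideal.mul_mem_right a _ this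
        simpa [mul_comm, mul_assoc, mul_left_comm] using this
    refine ⟨Submodule.Quotient.mk ⟨(i : A) * (b * b) + (j : A) * (a * a), hxmem⟩, ?_⟩
    have heval := hgmk ⟨_, hxmem⟩ (hIJ_I hxmem) (hIJ_J hxmem)
    rw [heval]
    refine Prod.ext ?_ ?_
    · rw [Submodule.Quotient.eq]
      show ((i : A) * (b * b) + (j : A) * (a * a)) - (i : A) ∈ I ^ 2
      have key : ((i : A) * (b * b) + (j : A) * (a * a)) - (i : A)
          = a * (a * ((j : A) - (i : A)) - 2 * ((i : A) * b)) := by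
        linear_combination ((i : A) * (a + b + 1)) * hab
      rw [key, pow_two]
      refine Ideal.mul_mem_mul ha (sub_mem ?_ ?_)
      · exact Ideal.mul_mem_right _ _ ha
      · exact Ideal.mul_mem_left _ 2 (Ideal.mul_mem_right _ _ i.2)
    · rw [Submodule.Quotient.eq]
      show ((i : A) * (b * b) + (j : A) * (a * a)) - (j : A) ∈ J ^ 2
      have key : ((i : A) * (b * b) + (j : A) * (a * a)) - (j : A)
          = b * (b * ((i : A) - (j : A)) - 2 * ((j : A) * a)) := by
        linear_combination ((j : A) * (a + b + 1)) * hab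
      rw [key, pow_two]
      refine Ideal.mul_mem_mul hb (sub_mem ?_ ?_)
      · exact Ideal.mul_mem_right _ _ hb
      · exact Ideal.mul_mem_left _ 2 (Ideal.mul_mem_right _ _ j.2)
  refine ⟨LinearEquiv.ofBijective g ⟨hinj, hsurj⟩, hgmk⟩
end

section
/- Let A be a commutative ring, I and J comaximal ideals, F₁, F₂ finite free A-modules of the same rank n, with surjections φ₁ : F₁ ↠ I and φ₂ : F₂ ↠ J. Then there is a surjection F ↠ I·J/(I²J²) factoring the free module F = A^n onto I·J modulo (IJ)², i.e., there exists an A-linear map φ̄ : A^n → I·J/(I·J)² which is surjective. -/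
/-!
Write `1 = e + f` with `e ∈ I`, `f ∈ J`, and glue the two surjections into
`ψ = f² • φ₁ + e² • φ₂`, which takes values in `I·J`. Given `x ∈ I·J`, pick `φ₁ v₁ = x = φ₂ v₂`;
since `e³ + f³ = 1 - 3ef`, the difference `ψ (f • v₁ + e • v₂) - x` is `ef` times an element of
`I·J`, hence lies in `(I·J)²`.
-/

theorem Submodule.mkQ_comp_codRestrict_surjective {R M F : Type*} [Ring R] [AddCommGroup M]
    [Module R M] [AddCommMonoid F] [Module R F] (p q : Submodule R M) (g : F →ₗ[R] M)
    (hg : ∀ v, g v ∈ p) (h : ∀ x ∈ p, ∃ v, g v - x ∈ q) :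
    Function.Surjective ((q.comap p.subtype).mkQ ∘ₗ LinearMap.codRestrict p g hg) := by
  intro y
  obtain ⟨⟨x, hx⟩, rfl⟩ := Submodule.mkQ_surjective _ y
  obtain ⟨v, hv⟩ := h x hx
  exact ⟨v, (Submodule.Quotient.eq _).mpr hv⟩

theorem Ideal.sq_mul_add_sq_mul_sub_mem_mul_sq {A : Type*} [CommRing A] {I J : Ideal A}
    {e f x a b : A} (he : e ∈ I) (hf : f ∈ J) (hef : e + f = 1) (hx : x ∈ I * J) (ha : a ∈ I)
    (hb : b ∈ J) : f ^ 2 * (f * x + e * a) + e ^ 2 * (f * b + e * x) - x ∈ (I * J) ^ 2 := by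
  have hsum : f * a + e * b - 3 * x ∈ I * J :=
    sub_mem (add_mem (mul_mem_mul_rev ha hf) (mul_mem_mul he hb)) (mul_mem_left _ 3 hx)
  have hdiff : f ^ 2 * (f * x + e * a) + e ^ 2 * (f * b + e * x) - x
      = (e * f) * (f * a + e * b - 3 * x) := by
    linear_combination (x * (e ^ 2 - e * f + f ^ 2 + e + f + 1)) * hef
  rw [hdiff, sq]
  exact mul_mem_mul (mul_mem_mul he hf) hsum

theorem Ideal.exists_linearMap_approx_mul_of_sup_eq_top {A F : Type*} [CommRing A]
    [AddCommMonoid F] [Module A F] {I J : Ideal A} (hcom : I ⊔ J = ⊤) {φ₁ φ₂ : F →ₗ[A] A}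
    (hφ₁ : LinearMap.range φ₁ = I) (hφ₂ : LinearMap.range φ₂ = J) :
    ∃ ψ : F →ₗ[A] A, (∀ v, ψ v ∈ I * J) ∧ ∀ x ∈ I * J, ∃ v, ψ v - x ∈ (I * J) ^ 2 := by
  obtain ⟨e, he, f, hf, hef⟩ := Submodule.mem_sup.mp (hcom ▸ Submodule.mem_top : (1 : A) ∈ I ⊔ J)
  have hφ₁I (v : F) : φ₁ v ∈ I := hφ₁ ▸ LinearMap.mem_range_self φ₁ v
  have hφ₂J (v : F) : φ₂ v ∈ J := hφ₂ ▸ LinearMap.mem_range_self φ₂ v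
  refine ⟨f ^ 2 • φ₁ + e ^ 2 • φ₂, fun v => ?_, fun x hx => ?_⟩
  · simp only [LinearMap.add_apply, LinearMap.smul_apply, smul_eq_mul]
    exact add_mem (mul_mem_mul_rev (hφ₁I v) (J.pow_mem_of_mem hf 2 two_pos))
      (mul_mem_mul (I.pow_mem_of_mem he 2 two_pos) (hφ₂J v))
  · obtain ⟨v₁, hv₁⟩ : x ∈ LinearMap.range φ₁ := hφ₁ ▸ mul_le_left hx
    obtain ⟨v₂, hv₂⟩ : x ∈ LinearMap.range φ₂ := hφ₂ ▸ mul_le_right hx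
    refine ⟨f • v₁ + e • v₂, ?_⟩
    simpa [hv₁, hv₂] using
      sq_mul_add_sq_mul_sub_mem_mul_sq he hf hef hx (hφ₁I v₂) (hφ₂J v₁)

/-- for comaximal ideals `I, J` with surjections `φ₁ : A^n ↠ I`,
`φ₂ : A^n ↠ J`, there is a surjective `A`-linear map `A^n → I·J/(I·J)²`. -/
theorem stmt8 {A : Type*} [CommRing A] (I J : Ideal A) (hcom : I ⊔ J = ⊤) (n : ℕ)
    (φ₁ : (Fin n → A) →ₗ[A] A) (hφ₁ : LinearMap.range φ₁ = I)
    (φ₂ : (Fin n → A) →ₗ[A] A) (hφ₂ : LinearMap.range φ₂ = J) :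
    ∃ φBar : (Fin n → A) →ₗ[A]
        (↥(I * J) ⧸ (Submodule.comap (I * J).subtype ((I * J) ^ 2) : Submodule A ↥(I * J))),
      Function.Surjective φBar := by
  obtain ⟨ψ, hψ, happrox⟩ := Ideal.exists_linearMap_approx_mul_of_sup_eq_top hcom hφ₁ hφ₂
  exact ⟨_, Submodule.mkQ_comp_codRestrict_surjective _ _ ψ hψ happrox⟩
end
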